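/- Let (X, 𝒜) be a measurable space, let Q be a Markov (transition) kernel on X, and suppose Q satisfies a Doeblin minorization: there exist θ ∈ (0,1) and a probability measure ν on X such that Q(x, A) ≥ θ·ν(A) for every x ∈ X and every A ∈ 𝒜. Then for any two probability measures μ₁, μ₂ on X one has ‖Qμ₁ − Qμ₂‖_TV ≤ (1 − θ)·‖μ₁ − μ₂‖_TV. -/

import Mathlib

open MeasureTheory ProbabilityTheory

instance bindIsProbabilityMeasure {X : Type*} [MeasurableSpace X]
    (μ : Measure X) [IsProbabilityMeasure μ]
    (Q : Kernel X X) [IsMarkovKernel Q] :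
    IsProbabilityMeasure (μ.bind ⇑Q) := by
  constructor
  rw [Measure.bind_apply MeasurableSet.univ (Kernel.measurable Q).aemeasurable]
  simp

/-!
Write `μ₁ - μ₂ = ρ - σ` with `ρ ⟂ σ` (Jordan decomposition); since `μ₁, μ₂` have the same mass,
so do `ρ` and `σ`, say `c`, and `‖μ₁ - μ₂‖_TV = 2c`. Then `Qμ₁ - Qμ₂ = Qρ - Qσ`, and by the
minorization both `Qρ` and `Qσ` dominate the common part `m = θ c ν`. Cancelling it,
`‖Qρ - Qσ‖_TV ≤ (Qρ - m)(X) + (Qσ - m)(X) = 2 (1 - θ) c`.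
-/

open scoped ENNReal

namespace MeasureTheory

variable {X : Type*} [MeasurableSpace X]

lemma Measure.toSignedMeasure_sub_eq_iff {α β α' β' : Measure X}
    [IsFiniteMeasure α] [IsFiniteMeasure β] [IsFiniteMeasure α'] [IsFiniteMeasure β'] :
    α.toSignedMeasure - β.toSignedMeasure = α'.toSignedMeasure - β'.toSignedMeasure ↔
      α + β' = α' + β := by
  rw [sub_eq_sub_iff_add_eq_add, ← toSignedMeasure_add, ← toSignedMeasure_add,
    toSignedMeasure_eq_toSignedMeasure_iff]

lemma Measure.add_negPart_eq_posPart_add (μ₁ μ₂ : Measure X)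
    [IsFiniteMeasure μ₁] [IsFiniteMeasure μ₂] :
    μ₁ + (μ₁.toSignedMeasure - μ₂.toSignedMeasure).toJordanDecomposition.negPart
      = (μ₁.toSignedMeasure - μ₂.toSignedMeasure).toJordanDecomposition.posPart + μ₂ :=
  Measure.toSignedMeasure_sub_eq_iff.1
    (SignedMeasure.toSignedMeasure_toJordanDecomposition _).symm

lemma SignedMeasure.totalVariation_toSignedMeasure_sub_le (α β : Measure X)
    [IsFiniteMeasure α] [IsFiniteMeasure β] :
    (α.toSignedMeasure - β.toSignedMeasure).totalVariation ≤ α + β := by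
  simpa [totalVariation_eq_variation] using
    VectorMeasure.variation_sub_le (μ := α.toSignedMeasure) (ν := β.toSignedMeasure)

lemma SignedMeasure.totalVariation_toSignedMeasure_sub_le_of_le {α β m : Measure X}
    [IsFiniteMeasure α] [IsFiniteMeasure β] (hα : m ≤ α) (hβ : m ≤ β) :
    (α.toSignedMeasure - β.toSignedMeasure).totalVariation Set.univ
      ≤ (α Set.univ - m Set.univ) + (β Set.univ - m Set.univ) := by
  have : IsFiniteMeasure m := isFiniteMeasure_of_le α hα
  have hsplit : α + (β - m) = (α - m) + β := by
    calc α + (β - m) = (α - m) + ((β - m) + m) := by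
          rw [add_comm (β - m), ← add_assoc, Measure.sub_add_cancel_of_le hα]
      _ = (α - m) + β := by rw [Measure.sub_add_cancel_of_le hβ]
  rw [Measure.toSignedMeasure_sub_eq_iff.2 hsplit,
    ← Measure.sub_apply .univ hα, ← Measure.sub_apply .univ hβ, ← Measure.add_apply]
  exact totalVariation_toSignedMeasure_sub_le _ _ _

end MeasureTheory

namespace ProbabilityTheory.Kernel

variable {X Y : Type*} [MeasurableSpace X] [MeasurableSpace Y] {Q : Kernel X Y} {ε : ℝ≥0∞}
  {ν : Measure Y}

lemma smul_le_comp_of_minorization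
    (hmin : ∀ x A, MeasurableSet A → ε * ν A ≤ Q x A) (μ : Measure X) :
    (ε * μ Set.univ) • ν ≤ Q ∘ₘ μ := by
  refine Measure.le_iff.2 fun A hA => ?_
  rw [Measure.bind_apply hA Q.aemeasurable, Measure.smul_apply, smul_eq_mul,
    mul_right_comm, ← MeasureTheory.lintegral_const]
  exact lintegral_mono fun x => hmin x A hA

lemma totalVariation_comp_sub_comp_le_of_minorization [IsMarkovKernel Q] [IsProbabilityMeasure ν]
    (hmin : ∀ x A, MeasurableSet A → ε * ν A ≤ Q x A) (ρ σ : Measure X)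
    [IsFiniteMeasure ρ] [IsFiniteMeasure σ] (hρσ : ρ Set.univ = σ Set.univ) :
    ((Q ∘ₘ ρ).toSignedMeasure - (Q ∘ₘ σ).toSignedMeasure).totalVariation Set.univ
      ≤ (1 - ε) * (ρ Set.univ + σ Set.univ) := by
  have hρ := smul_le_comp_of_minorization hmin ρ
  have hσ := smul_le_comp_of_minorization hmin σ
  rw [← hρσ] at hσ
  refine (SignedMeasure.totalVariation_toSignedMeasure_sub_le_of_le hρ hσ).trans_eq ?_
  simp only [Measure.comp_apply_univ, Measure.smul_apply, measure_univ, smul_eq_mul, mul_one]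
  rw [← hρσ, mul_add, ENNReal.sub_mul fun _ _ => measure_ne_top ρ _, one_mul]

end ProbabilityTheory.Kernel

theorem doeblin_contraction
    {X : Type*} [MeasurableSpace X]
    (Q : Kernel X X) [IsMarkovKernel Q]
    (θ : ℝ) (hθ : θ ∈ Set.Ioo (0:ℝ) 1)
    (ν : Measure X) [IsProbabilityMeasure ν]
    (hmin : ∀ x : X, ∀ A : Set X, MeasurableSet A →
      ENNReal.ofReal θ * ν A ≤ Q x A)
    (μ₁ μ₂ : Measure X) [IsProbabilityMeasure μ₁] [IsProbabilityMeasure μ₂] :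
    ((μ₁.bind ⇑Q).toSignedMeasure - (μ₂.bind ⇑Q).toSignedMeasure).totalVariation Set.univ
      ≤ ENNReal.ofReal (1 - θ) *
        (μ₁.toSignedMeasure - μ₂.toSignedMeasure).totalVariation Set.univ := by
  set J := (μ₁.toSignedMeasure - μ₂.toSignedMeasure).toJordanDecomposition
  have hadd : μ₁ + J.negPart = J.posPart + μ₂ := Measure.add_negPart_eq_posPart_add μ₁ μ₂
  have hmass : J.posPart Set.univ = J.negPart Set.univ := by
    have h := congrArg (· Set.univ) hadd
    simp only [Measure.add_apply, measure_univ] at h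
    rw [add_comm] at h
    exact ((ENNReal.add_left_inj ENNReal.one_ne_top).1 h).symm
  have hcomp : Q ∘ₘ μ₁ + Q ∘ₘ J.negPart = Q ∘ₘ J.posPart + Q ∘ₘ μ₂ := by
    rw [← Measure.comp_add, hadd, Measure.comp_add]
  rw [Measure.toSignedMeasure_sub_eq_iff.2 hcomp, ENNReal.ofReal_sub _ hθ.1.le,
    ENNReal.ofReal_one, SignedMeasure.totalVariation, Measure.add_apply]
  exact Kernel.totalVariation_comp_sub_comp_le_of_minorization hmin _ _ hmass
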